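/- Let f : ℝⁿ → ℝ be continuously differentiable with ∇f bounded and Lipschitz, and let (φ_t)_{t∈ℝ} be the globally defined flow of ∇f. For x, y ∈ ℝⁿ and t > 0, let U_t(x,y) denote the set of Lipschitz paths γ : [0,t] → ℝⁿ with γ(0) = x and γ(t) = y, and define d_{∇f}(x,y,t) := (1/4) · inf{ ∫₀^t |γ'(s) − ∇f(γ(s))|² ds : γ ∈ U_t(x,y) }. Let K ⊆ ℝⁿ be compact, T > 0, and y₀ ∈ ℝⁿ be such that φ_t(x) ≠ y₀ for every x ∈ K and every t ∈ [0,T]. Then inf{ d_{∇f}(x,y₀,t) : x ∈ K, t ∈ (0,T] } > 0. -/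

import Mathlib

/-!
The points reached from `K` by the flow within time `T` form a compact set, hence lie at some
distance `δ > 0` from `y₀`. Let `γ` be a Lipschitz path from `x ∈ K` to `y₀` in time `t ≤ T`, with
defect `h = γ' - ∇f(γ)`. Since `∇f` is `L`-Lipschitz, Grönwall's inequality in integral form
gives `δ ≤ |γ(t) - φ_t(x)| ≤ e^{Lt} ∫₀ᵗ |h|`, and Cauchy–Schwarz turns this into
`∫₀ᵗ |h|² ≥ δ² e^{-2LT} / T`.
-/

open MeasureTheory

/-- The cost `d_{∇f}(x,y,t)`: infimum of `(1/4)∫₀ᵗ |γ'(s) − ∇f(γ(s))|² ds` over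
Lipschitz paths from `x` to `y` in time `t`. -/
noncomputable def dGrad18 (n : ℕ) (f : EuclideanSpace ℝ (Fin n) → ℝ)
    (x y : EuclideanSpace ℝ (Fin n)) (t : ℝ) : ℝ :=
  (1/4) * sInf { I : ℝ | ∃ γ : ℝ → EuclideanSpace ℝ (Fin n),
      (∃ K, LipschitzWith K γ) ∧ γ 0 = x ∧ γ t = y ∧
      I = ∫ s in (0:ℝ)..t, ‖deriv γ s - gradient f (γ s)‖^2 }

open Filter Set intervalIntegral Real
open scoped NNReal

theorem sq_intervalIntegral_le_mul_intervalIntegral_sq {g : ℝ → ℝ} {a b : ℝ} (hab : a ≤ b)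
    (hg : IntervalIntegrable g volume a b)
    (hg2 : IntervalIntegrable (fun s => g s ^ 2) volume a b) :
    (∫ s in a..b, g s) ^ 2 ≤ (b - a) * ∫ s in a..b, g s ^ 2 := by
  -- the quadratic `r ↦ ∫ (g - r)²` is nonnegative, so its discriminant is not positive
  have hquad : ∀ r : ℝ,
      0 ≤ (b - a) * (r * r) + (-2 * ∫ s in a..b, g s) * r + ∫ s in a..b, g s ^ 2 := by
    intro r
    have hexpand : ∫ s in a..b, (g s - r) ^ 2
        = (b - a) * (r * r) + (-2 * ∫ s in a..b, g s) * r + ∫ s in a..b, g s ^ 2 := by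
      simp_rw [sub_sq]
      rw [integral_add (hg2.sub ((hg.const_mul 2).mul_const r)) intervalIntegrable_const,
        integral_sub hg2 ((hg.const_mul 2).mul_const r), intervalIntegral.integral_mul_const,
        intervalIntegral.integral_const_mul, intervalIntegral.integral_const, smul_eq_mul]
      ring
    exact hexpand ▸ integral_nonneg hab fun s _ => sq_nonneg _
  have hdiscrim := discrim_le_zero hquad
  rw [discrim] at hdiscrim
  linarith

theorem le_mul_exp_of_le_add_mul_integral {w : ℝ → ℝ} (hw : Continuous w) {A L a b : ℝ}
    (hL : 0 ≤ L) (hab : a ≤ b) (h : ∀ s ∈ Icc a b, w s ≤ A + L * ∫ r in a..s, w r) :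
    w b ≤ A * exp (L * (b - a)) := by
  -- the right-hand side `u` satisfies `u' = L w ≤ L u`, so the differential Grönwall bound applies
  set u : ℝ → ℝ := fun s => A + L * ∫ r in a..s, w r
  have hu : ∀ s, HasDerivAt u (L * w s) s := fun s =>
    ((hw.integral_hasStrictDerivAt a s).hasDerivAt.const_mul L).const_add A
  have hgronwall := le_gronwallBound_of_liminf_deriv_right_le (f := u) (δ := A) (ε := 0)
    (fun s _ => (hu s).continuousAt.continuousWithinAt)
    (fun s _ r hr => (hu s).hasDerivWithinAt.liminf_right_slope_le hr) (by simp [u])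
    (fun s hs => by
      simpa using mul_le_mul_of_nonneg_left (h s (Ico_subset_Icc_self hs)) hL)
    b ⟨hab, le_rfl⟩
  rw [gronwallBound_ε0] at hgronwall
  exact (h b ⟨hab, le_rfl⟩).trans hgronwall

section VectorValued

variable {E : Type*} [NormedAddCommGroup E] [NormedSpace ℝ E]

theorem continuousOn_uncurry_Icc_prod_of_hasDerivAt {v : E → E} {L : ℝ≥0}
    {φ : ℝ → E → E} (hv : LipschitzWith L v) (hφ0 : ∀ x, φ 0 x = x)
    (hφ : ∀ t x, HasDerivAt (fun s => φ s x) (v (φ t x)) t) (T : ℝ) :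
    ContinuousOn (Function.uncurry φ) (Icc 0 T ×ˢ univ) := by
  have hφc : ∀ x, Continuous fun s => φ s x := fun x =>
    continuous_iff_continuousAt.2 fun s => (hφ s x).continuousAt
  refine continuousOn_prod_of_continuousOn_lipschitzOnWith' _ (Real.toNNReal (exp (L * T)))
    (fun s hs => LipschitzOnWith.of_dist_le_mul fun x _ x' _ => ?_)
    (fun x _ => (hφc x).continuousOn)
  have hdist := dist_le_of_trajectories_ODE (v := fun _ => v) (fun _ => hv) (hφc x).continuousOn
    (fun u _ => (hφ u x).hasDerivWithinAt) (hφc x').continuousOn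
    (fun u _ => (hφ u x').hasDerivWithinAt) le_rfl s hs
  rw [hφ0, hφ0, sub_zero] at hdist
  rw [Real.coe_toNNReal _ (exp_pos _).le, mul_comm]
  exact hdist.trans (by gcongr; exact hs.2)

variable {γ : ℝ → E} {K : ℝ≥0}

theorem LipschitzWith.intervalIntegrable_norm_deriv_sub_comp_pow [CompleteSpace E] {v : E → E}
    (hv : Continuous v) (hγ : LipschitzWith K γ) (a b : ℝ) (p : ℕ) :
    IntervalIntegrable (fun s => ‖deriv γ s - v (γ s)‖ ^ p) volume a b := by
  obtain ⟨M, hM⟩ := (isCompact_uIcc.image_of_continuousOn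
    (hv.comp hγ.continuous).continuousOn).isBounded.exists_norm_le
  refine (intervalIntegrable_const (c := ((K : ℝ) + M) ^ p)).mono_fun'
    ((((aestronglyMeasurable_deriv γ _).sub
      (hv.comp hγ.continuous).aestronglyMeasurable).norm).pow p) ?_
  refine (ae_restrict_iff' measurableSet_uIoc).2 (ae_of_all _ fun s hs => ?_)
  simp only [norm_pow, norm_norm]
  gcongr
  exact (_root_.norm_sub_le _ _).trans (add_le_add (norm_deriv_le_of_lipschitz hγ)
    (hM _ ⟨s, uIoc_subset_uIcc hs, rfl⟩))

theorem LipschitzWith.intervalIntegrable_deriv [CompleteSpace E] (hγ : LipschitzWith K γ)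
    (a b : ℝ) : IntervalIntegrable (deriv γ) volume a b :=
  intervalIntegrable_const.mono_fun' (aestronglyMeasurable_deriv γ _)
    (ae_of_all _ fun _ => norm_deriv_le_of_lipschitz hγ)

variable [FiniteDimensional ℝ E]

theorem LipschitzWith.integral_deriv_eq_sub (hγ : LipschitzWith K γ) (a b : ℝ) :
    ∫ s in a..b, deriv γ s = γ b - γ a := by
  refine (SeparatingDual.eq_iff_forall_dual_eq (R := ℝ)).2 fun g => ?_
  rw [← g.intervalIntegral_comp_comm (hγ.intervalIntegrable_deriv a b), g.map_sub]
  change _ = (g ∘ γ) b - (g ∘ γ) a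
  rw [← (g.lipschitz.comp hγ).lipschitzOnWith.absolutelyContinuousOnInterval.integral_deriv_eq_sub]
  refine integral_congr_ae ?_
  filter_upwards [hγ.ae_differentiableAt] with s hs _
  exact (g.hasFDerivAt.comp_hasDerivAt s hs.hasDerivAt).deriv.symm

variable {v : E → E} {L : ℝ≥0} {ψ : ℝ → E} {a b : ℝ}

theorem norm_sub_le_integral_norm_deriv_sub_mul_exp (hv : LipschitzWith L v)
    (hψ : ∀ s, HasDerivAt ψ (v (ψ s)) s) (hγ : LipschitzWith K γ) (hab : a ≤ b)
    (hγψ : γ a = ψ a) :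
    ‖γ b - ψ b‖ ≤ (∫ s in a..b, ‖deriv γ s - v (γ s)‖) * exp (L * (b - a)) := by
  have hψc : Continuous ψ := continuous_iff_continuousAt.2 fun s => (hψ s).continuousAt
  have hvψ : Continuous fun u => v (ψ u) := hv.continuous.comp hψc
  have hLw : Continuous fun u => (L : ℝ) * ‖γ u - ψ u‖ :=
    continuous_const.mul (hγ.continuous.sub hψc).norm
  have hdefect : ∀ c d, IntervalIntegrable (fun s => ‖deriv γ s - v (γ s)‖) volume c d := by
    simpa using hγ.intervalIntegrable_norm_deriv_sub_comp_pow hv.continuous (p := 1)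
  refine le_mul_exp_of_le_add_mul_integral (w := fun s => ‖γ s - ψ s‖)
    (hγ.continuous.sub hψc).norm L.coe_nonneg hab fun s hs => ?_
  have hsub : γ s - ψ s = ∫ u in a..s, (deriv γ u - v (ψ u)) := by
    rw [integral_sub (hγ.intervalIntegrable_deriv a s) (hvψ.intervalIntegrable a s),
      hγ.integral_deriv_eq_sub, integral_eq_sub_of_hasDerivAt (fun u _ => hψ u)
        (hvψ.intervalIntegrable a s), hγψ]
    abel
  calc ‖γ s - ψ s‖
      ≤ ∫ u in a..s, (‖deriv γ u - v (γ u)‖ + L * ‖γ u - ψ u‖) := by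
        rw [hsub]
        refine norm_integral_le_of_norm_le hs.1 (ae_of_all _ fun u _ => ?_)
          ((hdefect a s).add (hLw.intervalIntegrable a s))
        rw [← sub_add_sub_cancel _ (v (γ u))]
        exact (norm_add_le _ _).trans (by gcongr; exact hv.norm_sub_le _ _)
    _ = (∫ u in a..s, ‖deriv γ u - v (γ u)‖) + L * ∫ u in a..s, ‖γ u - ψ u‖ := by
        rw [integral_add (hdefect a s) (hLw.intervalIntegrable a s),
          intervalIntegral.integral_const_mul]
    _ ≤ _ := by
        gcongr
        exact integral_mono_interval le_rfl hs.1 hs.2 (ae_of_all _ fun _ => norm_nonneg _)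
          (hdefect a b)

theorem sq_norm_sub_mul_exp_le_mul_integral_sq (hv : LipschitzWith L v)
    (hψ : ∀ s, HasDerivAt ψ (v (ψ s)) s) (hγ : LipschitzWith K γ) (hab : a ≤ b)
    (hγψ : γ a = ψ a) :
    (‖γ b - ψ b‖ * exp (-(L * (b - a)))) ^ 2
      ≤ (b - a) * ∫ s in a..b, ‖deriv γ s - v (γ s)‖ ^ 2 := by
  have hdefect := hγ.intervalIntegrable_norm_deriv_sub_comp_pow hv.continuous a b
  calc (‖γ b - ψ b‖ * exp (-(L * (b - a)))) ^ 2
      ≤ (∫ s in a..b, ‖deriv γ s - v (γ s)‖) ^ 2 := by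
        gcongr
        rw [exp_neg, ← div_eq_mul_inv, div_le_iff₀ (exp_pos _)]
        exact norm_sub_le_integral_norm_deriv_sub_mul_exp hv hψ hγ hab hγψ
    _ ≤ _ := sq_intervalIntegral_le_mul_intervalIntegral_sq hab (by simpa using hdefect 1)
        (hdefect 2)

end VectorValued

theorem le_dGrad18 {n : ℕ} {f : EuclideanSpace ℝ (Fin n) → ℝ} {x y : EuclideanSpace ℝ (Fin n)}
    {t c : ℝ} (ht : t ≠ 0)
    (h : ∀ γ : ℝ → EuclideanSpace ℝ (Fin n), (∃ K, LipschitzWith K γ) → γ 0 = x → γ t = y →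
      c ≤ ∫ s in (0:ℝ)..t, ‖deriv γ s - gradient f (γ s)‖ ^ 2) :
    c / 4 ≤ dGrad18 n f x y t := by
  rw [dGrad18, div_eq_inv_mul, one_div]
  gcongr
  -- `le_csInf` needs a competitor (the `sInf` of the empty set is `0`): the straight segment
  refine le_csInf ⟨_, fun s => AffineMap.lineMap x y (t⁻¹ • s),
    ⟨_, (lipschitzWith_lineMap x y).comp (lipschitzWith_smul t⁻¹)⟩, by simp, by simp [ht], rfl⟩
    ?_
  rintro _ ⟨γ, hγ, hγ0, hγt, rfl⟩
  exact h γ hγ hγ0 hγt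

theorem stmt18_general (n : ℕ) (f : EuclideanSpace ℝ (Fin n) → ℝ)
    (hlip : ∃ Kl, LipschitzWith Kl (gradient f))
    (φ : ℝ → EuclideanSpace ℝ (Fin n) → EuclideanSpace ℝ (Fin n))
    (hφ0 : ∀ x, φ 0 x = x)
    (hφ : ∀ (t : ℝ) (x : EuclideanSpace ℝ (Fin n)),
      HasDerivAt (fun s => φ s x) (gradient f (φ t x)) t)
    (K : Set (EuclideanSpace ℝ (Fin n))) (hK : IsCompact K)
    (T : ℝ) (hT : 0 < T) (y₀ : EuclideanSpace ℝ (Fin n))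
    (hmiss : ∀ x ∈ K, ∀ t ∈ Set.Icc (0:ℝ) T, φ t x ≠ y₀) :
    ∃ m > 0, ∀ x ∈ K, ∀ t ∈ Set.Ioc (0:ℝ) T, m ≤ dGrad18 n f x y₀ t := by
  obtain ⟨L, hL⟩ := hlip
  have hreached : IsCompact (Function.uncurry φ '' (Icc 0 T ×ˢ K)) :=
    (isCompact_Icc.prod hK).image_of_continuousOn
      ((continuousOn_uncurry_Icc_prod_of_hasDerivAt hL hφ0 hφ T).mono
        (prod_mono_right (subset_univ K)))
  obtain ⟨δ, hδ, hball⟩ := Metric.isOpen_iff.1 hreached.isClosed.isOpen_compl y₀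
    (by rintro ⟨⟨t, x⟩, ⟨ht, hx⟩, h⟩; exact hmiss x hx t ht h)
  refine ⟨(δ * exp (-(L * T))) ^ 2 / T / 4, by positivity, fun x hx t ht => ?_⟩
  refine le_dGrad18 ht.1.ne' fun γ ⟨Kγ, hγ⟩ hγ0 hγt => ?_
  have hδ_le : δ ≤ ‖γ t - φ t x‖ := by
    rw [hγt, ← dist_eq_norm, dist_comm]
    exact not_lt.1 fun h => hball h ⟨(t, x), ⟨⟨ht.1.le, ht.2⟩, hx⟩, rfl⟩
  have hcost := sq_norm_sub_mul_exp_le_mul_integral_sq (a := 0) (b := t) hL (hφ · x) hγ ht.1.le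
    (by rw [hγ0, hφ0])
  rw [sub_zero] at hcost
  rw [div_le_iff₀ hT]
  calc (δ * exp (-(L * T))) ^ 2 ≤ (‖γ t - φ t x‖ * exp (-(L * t))) ^ 2 := by
        gcongr
        exact ht.2
    _ ≤ t * _ := hcost
    _ ≤ _ := by
        rw [mul_comm]
        exact mul_le_mul_of_nonneg_left ht.2 (integral_nonneg ht.1.le fun _ _ => by positivity)

/-- Geometric part of Proposition 1.12 (Euclidean form): if no point of the compact
set `K` reaches `y₀` along the gradient flow of `f` in time at most `T`, then the
cost `d_{∇f}(x,y₀,t)` is uniformly bounded below by a positive constant for `x ∈ K`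
and `t ∈ (0,T]`. -/
theorem stmt18 (n : ℕ) (f : EuclideanSpace ℝ (Fin n) → ℝ)
    (hf : ContDiff ℝ 1 f) (hbdd : ∃ C, ∀ z, ‖gradient f z‖ ≤ C)
    (hlip : ∃ Kl, LipschitzWith Kl (gradient f))
    (φ : ℝ → EuclideanSpace ℝ (Fin n) → EuclideanSpace ℝ (Fin n))
    (hφ0 : ∀ x, φ 0 x = x)
    (hφ : ∀ (t : ℝ) (x : EuclideanSpace ℝ (Fin n)),
      HasDerivAt (fun s => φ s x) (gradient f (φ t x)) t)
    (K : Set (EuclideanSpace ℝ (Fin n))) (hK : IsCompact K)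
    (T : ℝ) (hT : 0 < T) (y₀ : EuclideanSpace ℝ (Fin n))
    (hmiss : ∀ x ∈ K, ∀ t ∈ Set.Icc (0:ℝ) T, φ t x ≠ y₀) :
    ∃ m > 0, ∀ x ∈ K, ∀ t ∈ Set.Ioc (0:ℝ) T, m ≤ dGrad18 n f x y₀ t :=
  stmt18_general n f hlip φ hφ0 hφ K hK T hT y₀ hmiss
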